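/- Let f : [0,1] → ℝ be 1-Lipschitz, and for ς > 0 and k ≥ 1 let S_f(ς;k) denote the set of indices i ∈ [0, 2^k - 1] such that f is not ς-semilinear on the dyadic interval [i/2^k, (i+1)/2^k]. For ς, ϑ > 0 and integers 0 < m < n let Y_f(ς;ϑ;m,n) be the set of k ∈ [m, n-1] with |S_f(ς;k)| ≥ ϑ 2^k. Then |Y_f(ς;ϑ;m,n)| ≤ 1/(ς² ϑ). -/

import Mathlib

open scoped Classical

/-- `badSet f ς k` is the set `S_f(ς;k)` of indices `i ∈ [0, 2^k - 1]` such that `f` is not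
`ς`-semilinear on the dyadic interval `[i/2^k, (i+1)/2^k]`. -/
noncomputable def badSet (f : ℝ → ℝ) (ς : ℝ) (k : ℕ) : Finset ℕ :=
  (Finset.range (2 ^ k)).filter (fun i =>
    ¬ |f ((2 * (i : ℝ) + 1) / 2 ^ (k + 1)) - (f ((i : ℝ) / 2 ^ k) + f (((i : ℝ) + 1) / 2 ^ k)) / 2|
        ≤ ς * ((2 : ℝ) ^ k)⁻¹)

/-!
Consider the dyadic energy `E_k = 2^k ∑_i (f((i+1)/2^k) - f(i/2^k))²`. For a 1-Lipschitz `f`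
each increment is at most `2^-k`, so `0 ≤ E_k ≤ 1`. Splitting every dyadic interval at its midpoint
and applying the parallelogram law gives
`E_{k+1} - E_k = 2^(k+2) ∑_i (f(midpoint) - average of f at the endpoints)²`,
so the energy is nondecreasing and every scale in `Y_f(ς;ϑ;m,n)` raises it by at least `4ς²ϑ`.
Telescoping, `4ς²ϑ · |Y_f(ς;ϑ;m,n)| ≤ 1`.
-/

open Finset

noncomputable def midpointDefect (f : ℝ → ℝ) (k i : ℕ) : ℝ :=
  f ((2 * (i : ℝ) + 1) / 2 ^ (k + 1)) - (f ((i : ℝ) / 2 ^ k) + f (((i : ℝ) + 1) / 2 ^ k)) / 2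

noncomputable def dyadicEnergy (f : ℝ → ℝ) (k : ℕ) : ℝ :=
  2 ^ k * ∑ i ∈ range (2 ^ k), (f (((i : ℝ) + 1) / 2 ^ k) - f ((i : ℝ) / 2 ^ k)) ^ 2

lemma sum_range_two_mul {M : Type*} [AddCommMonoid M] (g : ℕ → M) (n : ℕ) :
    ∑ j ∈ range (2 * n), g j = ∑ i ∈ range n, (g (2 * i) + g (2 * i + 1)) := by
  induction n with
  | zero => simp
  | succ n ih =>
    rw [show 2 * (n + 1) = 2 * n + 1 + 1 by ring, sum_range_succ, sum_range_succ, ih,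
      sum_range_succ, add_assoc]

lemma dyadicEnergy_succ_sub (f : ℝ → ℝ) (k : ℕ) :
    dyadicEnergy f (k + 1) - dyadicEnergy f k =
      2 ^ (k + 2) * ∑ i ∈ range (2 ^ k), midpointDefect f k i ^ 2 := by
  unfold dyadicEnergy midpointDefect
  rw [pow_succ' (2 : ℕ) k, pow_succ' (2 : ℝ) k, sum_range_two_mul, mul_sum, mul_sum, mul_sum,
    ← sum_sub_distrib]
  refine sum_congr rfl fun i _ => ?_
  have hleft : (((2 * i : ℕ) : ℝ)) / (2 * 2 ^ k) = (i : ℝ) / 2 ^ k := by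
    push_cast; field_simp
  have hright : (((2 * i + 1 : ℕ) : ℝ) + 1) / (2 * 2 ^ k) = ((i : ℝ) + 1) / 2 ^ k := by
    push_cast; field_simp; ring
  rw [hleft, hright]
  push_cast
  ring

lemma dyadicEnergy_le_succ (f : ℝ → ℝ) (k : ℕ) : dyadicEnergy f k ≤ dyadicEnergy f (k + 1) := by
  rw [← sub_nonneg, dyadicEnergy_succ_sub]
  positivity

lemma dyadicEnergy_nonneg (f : ℝ → ℝ) (k : ℕ) : 0 ≤ dyadicEnergy f k := by
  unfold dyadicEnergy
  positivity

lemma dyadicEnergy_le_sq {f : ℝ → ℝ} {K : NNReal} (hf : LipschitzOnWith K f (Set.Icc 0 1))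
    (k : ℕ) : dyadicEnergy f k ≤ K ^ 2 := by
  have hpow : (0 : ℝ) < 2 ^ k := by positivity
  have hmem : ∀ x : ℝ, 0 ≤ x → x ≤ 2 ^ k → x / 2 ^ k ∈ Set.Icc (0 : ℝ) 1 := fun x hx₀ hx₁ =>
    ⟨by positivity, (div_le_one hpow).mpr hx₁⟩
  have hincrement : ∀ i ∈ range (2 ^ k),
      (f (((i : ℝ) + 1) / 2 ^ k) - f ((i : ℝ) / 2 ^ k)) ^ 2 ≤ (K / 2 ^ k) ^ 2 := by
    intro i hi
    have hi' : (i : ℝ) + 1 ≤ 2 ^ k := by exact_mod_cast mem_range.mp hi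
    have hdist := hf.dist_le_mul _ (hmem ((i : ℝ) + 1) (by positivity) hi')
      _ (hmem (i : ℝ) (by positivity) (by linarith))
    rw [Real.dist_eq, Real.dist_eq, div_sub_div_same, add_sub_cancel_left,
      abs_of_pos (one_div_pos.mpr hpow), mul_one_div] at hdist
    rw [← sq_abs]
    exact pow_le_pow_left₀ (abs_nonneg _) hdist 2
  calc dyadicEnergy f k ≤ 2 ^ k * ∑ _i ∈ range (2 ^ k), ((K : ℝ) / 2 ^ k) ^ 2 := by
        unfold dyadicEnergy
        gcongr 2 ^ k * ?_
        exact sum_le_sum hincrement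
    _ = K ^ 2 := by
        rw [sum_const, card_range, nsmul_eq_mul]
        push_cast
        field_simp

lemma sq_le_midpointDefect_sq_of_mem_badSet {f : ℝ → ℝ} {ς : ℝ} (hς : 0 ≤ ς) {k i : ℕ}
    (hi : i ∈ badSet f ς k) : (ς / 2 ^ k) ^ 2 ≤ midpointDefect f k i ^ 2 := by
  have hbad : ς / 2 ^ k < |midpointDefect f k i| := by
    rw [div_eq_mul_inv]
    exact not_le.mp (mem_filter.mp hi).2
  rw [← sq_abs (midpointDefect f k i)]
  exact pow_le_pow_left₀ (by positivity) hbad.le 2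

lemma four_mul_sq_mul_card_badSet_le {ς : ℝ} (hς : 0 ≤ ς) (f : ℝ → ℝ) (k : ℕ) :
    4 * ς ^ 2 * (badSet f ς k).card ≤ 2 ^ k * (dyadicEnergy f (k + 1) - dyadicEnergy f k) := by
  have hsum : (badSet f ς k).card * (ς / 2 ^ k) ^ 2 ≤
      ∑ i ∈ range (2 ^ k), midpointDefect f k i ^ 2 :=
    calc (badSet f ς k).card * (ς / 2 ^ k) ^ 2
        ≤ ∑ i ∈ badSet f ς k, midpointDefect f k i ^ 2 := by
          rw [← nsmul_eq_mul]
          exact card_nsmul_le_sum _ _ _ fun i hi => sq_le_midpointDefect_sq_of_mem_badSet hς hi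
      _ ≤ ∑ i ∈ range (2 ^ k), midpointDefect f k i ^ 2 :=
          sum_le_sum_of_subset_of_nonneg (filter_subset _ _) fun _ _ _ => sq_nonneg _
  rw [dyadicEnergy_succ_sub]
  have hpow : (0 : ℝ) < 2 ^ k := by positivity
  calc 4 * ς ^ 2 * (badSet f ς k).card
      = 2 ^ k * 2 ^ (k + 2) * ((badSet f ς k).card * (ς / 2 ^ k) ^ 2) := by
        field_simp
        ring
    _ ≤ 2 ^ k * 2 ^ (k + 2) * ∑ i ∈ range (2 ^ k), midpointDefect f k i ^ 2 := by gcongr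
    _ = _ := by ring

theorem stmt2_general (f : ℝ → ℝ) (hf : LipschitzOnWith 1 f (Set.Icc 0 1)) (ς ϑ : ℝ)
    (hς : 0 < ς) (hϑ : 0 < ϑ) (m n : ℕ) :
    ((((Finset.Ico m n).filter (fun k => ϑ * 2 ^ k ≤ ((badSet f ς k).card : ℝ))).card : ℝ))
      ≤ 1 / (ς ^ 2 * ϑ) := by
  set Y := (Ico m n).filter (fun k => ϑ * 2 ^ k ≤ ((badSet f ς k).card : ℝ))
  set Δ : ℕ → ℝ := fun k => dyadicEnergy f (k + 1) - dyadicEnergy f k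
  have hgain : ∀ k ∈ Y, 4 * (ς ^ 2 * ϑ) ≤ Δ k := fun k hk => by
    refine le_of_mul_le_mul_left ?_ (by positivity : (0 : ℝ) < 2 ^ k)
    calc 2 ^ k * (4 * (ς ^ 2 * ϑ)) = 4 * ς ^ 2 * (ϑ * 2 ^ k) := by ring
      _ ≤ 4 * ς ^ 2 * (badSet f ς k).card := by gcongr; exact (mem_filter.mp hk).2
      _ ≤ 2 ^ k * Δ k := four_mul_sq_mul_card_badSet_le hς.le f k
  have hY : Y ⊆ range n := fun k hk => mem_range.mpr (mem_Ico.mp (mem_filter.mp hk).1).2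
  have htotal : Y.card * (4 * (ς ^ 2 * ϑ)) ≤ 1 :=
    calc Y.card * (4 * (ς ^ 2 * ϑ)) = ∑ _k ∈ Y, 4 * (ς ^ 2 * ϑ) := by
          rw [sum_const, nsmul_eq_mul]
      _ ≤ ∑ k ∈ Y, Δ k := sum_le_sum hgain
      _ ≤ ∑ k ∈ range n, Δ k := sum_le_sum_of_subset_of_nonneg hY fun k _ _ =>
          sub_nonneg.mpr (dyadicEnergy_le_succ f k)
      _ = dyadicEnergy f n - dyadicEnergy f 0 := sum_range_sub _ n
      _ ≤ 1 := by
          have hle : dyadicEnergy f n ≤ ((1 : NNReal) : ℝ) ^ 2 := dyadicEnergy_le_sq hf n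
          have hnonneg := dyadicEnergy_nonneg f 0
          norm_num at hle
          linarith
  rw [le_div_iff₀ (by positivity)]
  nlinarith [(Nat.cast_nonneg Y.card : (0 : ℝ) ≤ Y.card)]

/-- For a 1-Lipschitz `f` on `[0,1]`, the number of dyadic scales `k ∈ [m, n-1]` at which `f`
fails to be `ς`-semilinear on at least a `ϑ`-fraction of the dyadic intervals is at most
`1/(ς² ϑ)`. -/
theorem stmt2 (f : ℝ → ℝ) (hf : LipschitzOnWith 1 f (Set.Icc 0 1)) (ς ϑ : ℝ)
    (hς : 0 < ς) (hϑ : 0 < ϑ) (m n : ℕ) (hm : 0 < m) (hmn : m < n) :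
    ((((Finset.Ico m n).filter (fun k => ϑ * 2 ^ k ≤ ((badSet f ς k).card : ℝ))).card : ℝ))
      ≤ 1 / (ς ^ 2 * ϑ) :=
  stmt2_general f hf ς ϑ hς hϑ m n
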